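/- Let d ≥ 1 and μ : Fin d → ℝ. Let Q σ be the pushforward of the product measure ⨂_{i} gaussianReal (μ i) (σ²) on Fin d → ℝ under the componentwise quotient map (Fin d → ℝ) → (Fin d → AddCircle 1). Then, as σ → ∞, Q σ converges weakly to the product of Haar probability measures on Fin d → AddCircle 1 (the uniform distribution on the d-dimensional torus). -/

import Mathlib

open MeasureTheory ProbabilityTheory Filter Topology

/-- The wrapped product Gaussian probability measure on the `d`-dimensional torus, obtained by
pushing forward the product of Gaussians `N(μ i, σ²)` under the componentwise quotient map. -/
noncomputable def wrappedGaussianTorus (d : ℕ) (μ : Fin d → ℝ) (σ : ℝ) :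
    ProbabilityMeasure (Fin d → AddCircle (1 : ℝ)) :=
  ProbabilityMeasure.map
    ⟨Measure.pi (fun i => gaussianReal (μ i) (⟨σ ^ 2, sq_nonneg σ⟩ : NNReal)),
      @Measure.pi.instIsProbabilityMeasure _ _ _ _ _ (fun _ => instIsProbabilityMeasureGaussianReal _ _)⟩
    (f := fun x : Fin d → ℝ => fun i => (x i : AddCircle (1 : ℝ)))
    (by
      refine Measurable.aemeasurable ?_
      exact measurable_pi_lambda _ fun i =>
        (AddCircle.continuous_mk' 1).measurable.comp (measurable_pi_apply i))

/-- The uniform probability measure on the `d`-dimensional torus: the product of Haar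
probability measures on the circle `ℝ/ℤ`. -/
noncomputable def uniformTorus (d : ℕ) : ProbabilityMeasure (Fin d → AddCircle (1 : ℝ)) :=
  ⟨Measure.pi (fun _ : Fin d => (volume : Measure (AddCircle (1 : ℝ)))), by
    haveI : ∀ _i : Fin d, IsProbabilityMeasure (volume : Measure (AddCircle (1 : ℝ))) :=
      fun _ => ⟨by rw [AddCircle.measure_univ]; simp⟩
    infer_instance⟩

/-!
Integration against a probability measure is `1`-Lipschitz on bounded continuous functions, so
the functions along which the integrals converge form a closed subspace, and weak convergence may
be tested on any family with dense span. The wrapped Gaussian on the torus is the product of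
wrapped Gaussians on the circle, and products of probability measures depend continuously on the
factors, so it suffices to treat one circle `ℝ/Tℤ`, tested against the characters `fourier k`.
The `k`-th Fourier coefficient of the wrapped `N(m, v)` is the Gaussian characteristic function at
`2πk/T`, of modulus `exp (-(2πk/T)² v / 2)`; for `k ≠ 0` it tends to `0 = ∫ fourier k ∂haar` as
`v → ∞`.
-/

open scoped BoundedContinuousFunction Real NNReal

namespace MeasureTheory.ProbabilityMeasure

variable {X 𝕜 : Type*} [TopologicalSpace X] [MeasurableSpace X] [OpensMeasurableSpace X]
  [RCLike 𝕜]

lemma lipschitzWith_one_integral (ν : ProbabilityMeasure X) :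
    LipschitzWith 1 fun g : X →ᵇ 𝕜 ↦ ∫ x, g x ∂ν := by
  refine LipschitzWith.of_dist_le_mul fun f g ↦ ?_
  rw [NNReal.coe_one, one_mul, dist_eq_norm, dist_eq_norm,
    ← integral_sub (f.integrable ν) (g.integrable ν)]
  exact BoundedContinuousFunction.norm_integral_le_norm ν (f - g)

theorem tendsto_of_dense_span_of_forall_integral_tendsto {ι : Type*} {F : Filter ι}
    {μs : ι → ProbabilityMeasure X} {μ : ProbabilityMeasure X} {S : Set (X →ᵇ 𝕜)}
    (hS : Dense (Submodule.span 𝕜 S : Set (X →ᵇ 𝕜)))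
    (h : ∀ g ∈ S, Tendsto (fun i ↦ ∫ x, g x ∂μs i) F (𝓝 (∫ x, g x ∂μ))) :
    Tendsto μs F (𝓝 μ) := by
  rw [tendsto_iff_forall_integral_rclike_tendsto 𝕜]
  have h_span : ∀ g ∈ Submodule.span 𝕜 S,
      Tendsto (fun i ↦ ∫ x, g x ∂μs i) F (𝓝 (∫ x, g x ∂μ)) := by
    intro g hg
    induction hg using Submodule.span_induction with
    | mem g hg => exact h g hg
    | zero => simpa using tendsto_const_nhds
    | add f g _ _ hf hg =>
      have h_add (ν : ProbabilityMeasure X) : ∫ x, (f + g) x ∂ν = ∫ x, f x ∂ν + ∫ x, g x ∂ν :=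
        integral_add (f.integrable ν) (g.integrable ν)
      simpa only [h_add] using hf.add hg
    | smul c g _ hg =>
      simpa only [BoundedContinuousFunction.coe_smul, Pi.smul_apply, integral_smul]
        using hg.const_smul c
  have h_closed :
      IsClosed {g : X →ᵇ 𝕜 | Tendsto (fun i ↦ ∫ x, g x ∂μs i) F (𝓝 (∫ x, g x ∂μ))} :=
    Equicontinuous.isClosed_setOfPred_tendsto
      (LipschitzWith.uniformEquicontinuous _ 1 fun i ↦
        lipschitzWith_one_integral (μs i)).equicontinuous
      (lipschitzWith_one_integral μ).continuous
  exact fun g ↦ h_closed.closure_subset_iff.2 h_span (hS g)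

theorem tendsto_of_topologicalClosure_span_eq_top_of_forall_integral_tendsto [CompactSpace X]
    {ι : Type*} {F : Filter ι} {μs : ι → ProbabilityMeasure X} {μ : ProbabilityMeasure X}
    {S : Set C(X, 𝕜)} (hS : (Submodule.span 𝕜 S).topologicalClosure = ⊤)
    (h : ∀ g ∈ S, Tendsto (fun i ↦ ∫ x, g x ∂μs i) F (𝓝 (∫ x, g x ∂μ))) :
    Tendsto μs F (𝓝 μ) := by
  let L := ContinuousMap.linearIsometryBoundedOfCompact X 𝕜 𝕜
  refine tendsto_of_dense_span_of_forall_integral_tendsto (S := L '' S) ?_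
    (by rintro _ ⟨g, hg, rfl⟩; exact h g hg)
  rw [← L.coe_toLinearEquiv, ← LinearEquiv.coe_coe, Submodule.span_image, Submodule.map_coe]
  exact L.surjective.denseRange.dense_image L.continuous
    (Submodule.dense_iff_topologicalClosure_eq_top.2 hS)

end MeasureTheory.ProbabilityMeasure

namespace AddCircle

noncomputable def haarProbabilityMeasure (T : ℝ) [Fact (0 < T)] :
    ProbabilityMeasure (AddCircle T) :=
  ⟨haarAddCircle, inferInstance⟩

noncomputable def wrappedGaussian (T m : ℝ) (v : ℝ≥0) : ProbabilityMeasure (AddCircle T) :=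
  ProbabilityMeasure.map ⟨gaussianReal m v, inferInstance⟩
    (f := ((↑) : ℝ → AddCircle T)) (AddCircle.continuous_mk' T).measurable.aemeasurable

variable {T : ℝ}

lemma integral_fourier_haarAddCircle [Fact (0 < T)] (k : ℤ) :
    ∫ x, fourier k x ∂haarAddCircle (T := T) = if k = 0 then 1 else 0 := by
  have h := congr_fun (fourierCoeff_fourier (T := T) k) 0
  simp only [fourierCoeff, neg_zero, fourier_zero, one_smul, Pi.single_apply] at h
  simpa only [@eq_comm ℤ 0] using h

lemma integral_fourier_gaussianReal (k : ℤ) (m : ℝ) (v : ℝ≥0) :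
    ∫ x, fourier k (x : AddCircle T) ∂gaussianReal m v
      = Complex.exp (2 * π * k / T * m * Complex.I - v * (2 * π * k / T) ^ 2 / 2) := by
  have h := charFun_gaussianReal (μ := m) (v := v) (2 * π * k / T)
  rw [charFun_apply_real] at h
  push_cast at h
  rw [← h]
  congr 1 with x
  rw [fourier_coe_apply]
  ring_nf

lemma tendsto_integral_fourier_gaussianReal [Fact (0 < T)] (k : ℤ) (m : ℝ) :
    Tendsto (fun v : ℝ≥0 ↦ ∫ x, fourier k (x : AddCircle T) ∂gaussianReal m v) atTop
      (𝓝 (if k = 0 then 1 else 0)) := by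
  rcases eq_or_ne k 0 with rfl | hk
  · simp
  rw [if_neg hk, tendsto_zero_iff_norm_tendsto_zero]
  set c : ℝ := (2 * π * k / T) ^ 2 / 2
  have hc : 0 < c := by
    have hk' : (k : ℝ) ≠ 0 := by exact_mod_cast hk
    have hT : T ≠ 0 := (Fact.out : 0 < T).ne'
    positivity
  have h_norm (v : ℝ≥0) :
      ‖∫ x, fourier k (x : AddCircle T) ∂gaussianReal m v‖ = Real.exp (-(v * c)) := by
    rw [integral_fourier_gaussianReal, Complex.norm_exp]
    have h_split : (2 * π * k / T * m * Complex.I - v * (2 * π * k / T) ^ 2 / 2 : ℂ)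
        = ((-(v * c) : ℝ) : ℂ) + ((2 * π * k / T * m : ℝ) : ℂ) * Complex.I := by
      push_cast [c]
      ring
    rw [h_split, Complex.add_re, Complex.ofReal_re, Complex.re_ofReal_mul, Complex.I_re,
      mul_zero, add_zero]
  simp_rw [h_norm]
  exact Real.tendsto_exp_neg_atTop_nhds_zero.comp
    ((NNReal.tendsto_coe_atTop.2 tendsto_id).atTop_mul_const hc)

theorem tendsto_wrappedGaussian_atTop [Fact (0 < T)] (m : ℝ) :
    Tendsto (wrappedGaussian T m) atTop (𝓝 (haarProbabilityMeasure T)) := by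
  refine ProbabilityMeasure.tendsto_of_topologicalClosure_span_eq_top_of_forall_integral_tendsto
    span_fourier_closure_eq_top ?_
  rintro _ ⟨k, rfl⟩
  have h_wrapped (v : ℝ≥0) :
      ∫ x, fourier k x ∂(wrappedGaussian T m v : Measure (AddCircle T))
        = ∫ x, fourier k (x : AddCircle T) ∂gaussianReal m v :=
    integral_map (AddCircle.continuous_mk' T).measurable.aemeasurable
      (map_continuous _).aestronglyMeasurable
  simp_rw [h_wrapped]
  rw [show (haarProbabilityMeasure T : Measure (AddCircle T)) = haarAddCircle from rfl,
    integral_fourier_haarAddCircle]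
  exact tendsto_integral_fourier_gaussianReal k m

end AddCircle

lemma wrappedGaussianTorus_eq_pi (d : ℕ) (μ : Fin d → ℝ) (σ : ℝ) :
    wrappedGaussianTorus d μ σ
      = ProbabilityMeasure.pi fun i ↦ AddCircle.wrappedGaussian 1 (μ i) ⟨σ ^ 2, sq_nonneg σ⟩ :=
  Subtype.ext <| Measure.pi_map_pi
    (hμ := fun i ↦ inferInstanceAs <| SigmaFinite
      (AddCircle.wrappedGaussian 1 (μ i) ⟨σ ^ 2, sq_nonneg σ⟩ : Measure (AddCircle (1 : ℝ))))
    fun _ ↦ (AddCircle.continuous_mk' 1).measurable.aemeasurable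

lemma uniformTorus_eq_pi (d : ℕ) :
    uniformTorus d = ProbabilityMeasure.pi fun _ ↦ AddCircle.haarProbabilityMeasure 1 := by
  have h_volume : (volume : Measure (AddCircle (1 : ℝ))) = AddCircle.haarAddCircle := by
    rw [AddCircle.volume_eq_smul_haarAddCircle, ENNReal.ofReal_one, one_smul]
  exact Subtype.ext (congrArg Measure.pi (funext fun _ ↦ h_volume))

theorem wrappedGaussianTorus_tendsto_uniform_general (d : ℕ) (μ : Fin d → ℝ) :
    Tendsto (wrappedGaussianTorus d μ) atTop (𝓝 (uniformTorus d)) := by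
  have h_var : Tendsto (fun σ : ℝ ↦ (⟨σ ^ 2, sq_nonneg σ⟩ : ℝ≥0)) atTop atTop :=
    NNReal.tendsto_coe_atTop.1 (tendsto_pow_atTop two_ne_zero)
  simp_rw [funext (wrappedGaussianTorus_eq_pi d μ), uniformTorus_eq_pi]
  exact (ProbabilityMeasure.continuous_pi.tendsto _).comp
    (tendsto_pi_nhds.2 fun i ↦ (AddCircle.tendsto_wrappedGaussian_atTop (μ i)).comp h_var)

/-- The wrapped product Gaussian distribution on the `d`-dimensional torus converges weakly to
the uniform distribution (product of Haar probability measures) as `σ → ∞`. -/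
theorem wrappedGaussianTorus_tendsto_uniform (d : ℕ) (hd : 1 ≤ d) (μ : Fin d → ℝ) :
    Tendsto (wrappedGaussianTorus d μ) atTop (𝓝 (uniformTorus d)) :=
  wrappedGaussianTorus_tendsto_uniform_general d μ
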